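/- Let n ≥ 3 and k₂, ℓ₂, ℓ₃ ≥ 0, k₃ ≥ 1 be integers. Then k₃ · s(n,k₂,k₃,ℓ₂,ℓ₃) = 2n(n−1)·(k₂−1+ℓ₂) · s(n−2, k₂−1, k₃−1, ℓ₂, ℓ₃). -/

import Mathlib

/-- A cyclically reduced graph structure on `Fin n`: a permutation `σ` of order dividing 2
(whose fixed points are `a`-loops and whose 2-cycles are isolated `a`-edges) together with a
partial injective map `B` satisfying the triangle condition, such that every vertex is
`b`-adjacent and the structure is connected. -/
def IsCycRed {n : ℕ} (σ : Equiv.Perm (Fin n)) (B : Fin n → Option (Fin n)) : Prop :=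
  (∀ v, σ (σ v) = v) ∧
  (∀ v w u, B v = some u → B w = some u → v = w) ∧
  (∀ v w u, B v = some w → B w = some u → B u = some v) ∧
  (∀ v, B v ≠ none ∨ ∃ u, B u = some v) ∧
  (∀ v w : Fin n, Relation.EqvGen (fun x y => σ x = y ∨ B x = some y) v w)

/-- The structure `(σ, B)` has combinatorial type `(n, k₂, k₃, ℓ₂, ℓ₃)`:
`k₂` isolated `a`-edges, `k₃` isolated `b`-edges, `ℓ₂` `a`-loops, `ℓ₃` `b`-loops. -/
def HasCombType {n : ℕ} (σ : Equiv.Perm (Fin n)) (B : Fin n → Option (Fin n))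
    (k2 k3 l2 l3 : ℕ) : Prop :=
  Nat.card {v : Fin n // σ v ≠ v} = 2 * k2 ∧
  Nat.card {v : Fin n // ∃ w, v ≠ w ∧ B v = some w ∧ B w = none} = k3 ∧
  Nat.card {v : Fin n // σ v = v} = l2 ∧
  Nat.card {v : Fin n // B v = some v} = l3

/-- `s n k₂ k₃ ℓ₂ ℓ₃` is the number of cyclically reduced graph structures on `Fin n`
of combinatorial type `(n, k₂, k₃, ℓ₂, ℓ₃)`, with the convention that `s = 0` if any
argument is negative. -/
noncomputable def s (n k2 k3 l2 l3 : ℤ) : ℕ :=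
  if 0 ≤ n ∧ 0 ≤ k2 ∧ 0 ≤ k3 ∧ 0 ≤ l2 ∧ 0 ≤ l3 then
    Nat.card {p : Equiv.Perm (Fin n.toNat) × (Fin n.toNat → Option (Fin n.toNat)) //
      IsCycRed p.1 p.2 ∧ HasCombType p.1 p.2 k2.toNat k3.toNat l2.toNat l3.toNat}
  else 0

/-!
Double count pairs (structure, isolated b-edge `v → w`) of type `(n, k₂, k₃, ℓ₂, ℓ₃)`. Every
structure has `k₃` isolated b-edges. Conversely, for each of the `n(n-1)` ordered pairs `(v, w)`,
deleting `v` and `w` and splicing their a-neighbours together (an a-edge `x — y` if `σ v = x` and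
`σ w = y`; an a-loop at `x` if one of `v`, `w` is an a-loop and the other is joined to `x`) is a
bijection onto pairs (structure of type `(n-2, k₂-1, k₃-1, ℓ₂, ℓ₃)`, mark), where a mark is an
oriented a-edge or an a-loop together with a side: `2(k₂-1) + 2ℓ₂` marks. Connectedness, with a
vertex outside `{v, w}`, excludes the two remaining configurations (`v`, `w` both a-loops, or an
a-edge `v — w`). The spliced structure always has one a-edge fewer, so nothing is counted when
`k₂ = 0`.
-/

open Function

theorem Relation.EqvGen.map {α β : Type*} {r : α → α → Prop} {r' : β → β → Prop} (f : α → β)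
    (h : ∀ a b, r a b → Relation.EqvGen r' (f a) (f b)) {a b : α}
    (hab : Relation.EqvGen r a b) : Relation.EqvGen r' (f a) (f b) :=
  Quot.eqvGen_exact <| congrArg
    (Quot.lift (Quot.mk r' ∘ f) fun _ _ h' => Quot.eqvGen_sound (h _ _ h')) (Quot.eqvGen_sound hab)

theorem Nat.card_subtype_sum {α β : Type*} [Finite α] [Finite β] (P : α ⊕ β → Prop) :
    Nat.card {u // P u} = Nat.card {a // P (.inl a)} + Nat.card {b // P (.inr b)} := by
  rw [Nat.card_congr Equiv.subtypeSum, Nat.card_sum]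

theorem Nat.card_fixed_add_card_moved {α : Type*} [Finite α] (f : α → α) :
    Nat.card {a // f a = a} + Nat.card {a // f a ≠ a} = Nat.card α := by
  classical
  rw [← Nat.card_sum, Nat.card_congr (Equiv.sumCompl _)]

theorem Nat.card_subtype_eq_or {α : Type*} [Finite α] {p : α → Prop} {x : α} (hx : ¬p x) :
    Nat.card {z // z = x ∨ p z} = Nat.card {z // p z} + 1 :=
  Set.ncard_insert_of_notMem hx

namespace CycRed

variable {V W : Type*} {k2 k3 l2 l3 : ℕ}

def Adj (σ : Equiv.Perm V) (B : V → Option V) (x y : V) : Prop :=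
  σ x = y ∨ B x = some y

/- `IsCycRed` and `HasCombType` over an arbitrary vertex type; on `Fin n` they unfold to the
same propositions (see `s_natCast`). -/
def IsReduced (σ : Equiv.Perm V) (B : V → Option V) : Prop :=
  (∀ v, σ (σ v) = v) ∧
  (∀ v w u, B v = some u → B w = some u → v = w) ∧
  (∀ v w u, B v = some w → B w = some u → B u = some v) ∧
  (∀ v, B v ≠ none ∨ ∃ u, B u = some v) ∧
  (∀ v w, Relation.EqvGen (Adj σ B) v w)

def IsIsolatedBEdge (B : V → Option V) (v w : V) : Prop :=
  v ≠ w ∧ B v = some w ∧ B w = none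

def HasType (σ : Equiv.Perm V) (B : V → Option V) (k2 k3 l2 l3 : ℕ) : Prop :=
  Nat.card {v // σ v ≠ v} = 2 * k2 ∧
  Nat.card {v // ∃ w, IsIsolatedBEdge B v w} = k3 ∧
  Nat.card {v // σ v = v} = l2 ∧
  Nat.card {v // B v = some v} = l3

variable (V) in
abbrev Struct (k2 k3 l2 l3 : ℕ) : Type _ :=
  {p : Equiv.Perm V × (V → Option V) // IsReduced p.1 p.2 ∧ HasType p.1 p.2 k2 k3 l2 l3}

variable (V) in
abbrev Pinned (v w : V) (k2 k3 l2 l3 : ℕ) : Type _ :=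
  {p : Struct V k2 k3 l2 l3 // p.1.2 v = some w ∧ p.1.2 w = none}

section Transport

variable (e : V ≃ W)

def congrB (B : V → Option V) (w : W) : Option W :=
  (B (e.symm w)).map e

@[simp] theorem congrB_apply_eq_some (B : V → Option V) (w u : W) :
    congrB e B w = some u ↔ B (e.symm w) = some (e.symm u) := by
  simp [congrB, ← Equiv.eq_symm_apply]

@[simp] theorem congrB_apply_eq_none (B : V → Option V) (w : W) :
    congrB e B w = none ↔ B (e.symm w) = none := by
  simp [congrB]

@[simp] theorem congrB_symm_congrB (B : V → Option V) : congrB e.symm (congrB e B) = B := by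
  funext v
  simp [congrB, Option.map_map, comp_def]

theorem adj_congr_apply (σ : Equiv.Perm V) (B : V → Option V) (a b : V) :
    Adj (e.permCongr σ) (congrB e B) (e a) (e b) ↔ Adj σ B a b := by
  simp [Adj, Equiv.permCongr_apply]

theorem IsReduced.congr {σ : Equiv.Perm V} {B : V → Option V} (h : IsReduced σ B) :
    IsReduced (e.permCongr σ) (congrB e B) := by
  obtain ⟨hσ, hinj, htri, hadj, hconn⟩ := h
  refine ⟨fun v => by simp [Equiv.permCongr_apply, hσ], fun v w u hv hw => ?_,
    fun v w u hv hw => ?_, fun v => ?_, fun v w => ?_⟩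
  · simp only [congrB_apply_eq_some] at hv hw
    exact e.symm.injective (hinj _ _ _ hv hw)
  · simp only [congrB_apply_eq_some] at hv hw ⊢
    exact htri _ _ _ hv hw
  · simpa [e.symm.exists_congr_left] using hadj (e.symm v)
  · simpa using (hconn (e.symm v) (e.symm w)).map e fun a b hab =>
      .rel _ _ ((adj_congr_apply e σ B a b).2 hab)

theorem HasType.congr {σ : Equiv.Perm V} {B : V → Option V} (h : HasType σ B k2 k3 l2 l3) :
    HasType (e.permCongr σ) (congrB e B) k2 k3 l2 l3 := by
  obtain ⟨h₁, h₂, h₃, h₄⟩ := h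
  refine ⟨h₁ ▸ Nat.card_congr (e.symm.subtypeEquiv fun w => ?_),
    h₂ ▸ Nat.card_congr (e.symm.subtypeEquiv fun w => ?_),
    h₃ ▸ Nat.card_congr (e.symm.subtypeEquiv fun w => ?_),
    h₄ ▸ Nat.card_congr (e.symm.subtypeEquiv fun w => ?_)⟩
  · simp [Equiv.permCongr_apply, Equiv.eq_symm_apply]
  · simp [IsIsolatedBEdge, e.symm.exists_congr_left, Equiv.symm_apply_eq]
  · simp [Equiv.permCongr_apply, Equiv.eq_symm_apply]
  · simp

def Struct.congr : Struct V k2 k3 l2 l3 ≃ Struct W k2 k3 l2 l3 where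
  toFun p := ⟨(e.permCongr p.1.1, congrB e p.1.2), p.2.1.congr e, p.2.2.congr e⟩
  invFun p :=
    ⟨(e.symm.permCongr p.1.1, congrB e.symm p.1.2), p.2.1.congr e.symm, p.2.2.congr e.symm⟩
  left_inv p := Subtype.ext <| Prod.ext (by ext; simp [Equiv.permCongr_apply]) (by simp)
  right_inv p := Subtype.ext <| Prod.ext (by ext; simp [Equiv.permCongr_apply])
    (by simpa using congrB_symm_congrB e.symm p.1.2)

def Pinned.congr (v w : V) : Pinned V v w k2 k3 l2 l3 ≃ Pinned W (e v) (e w) k2 k3 l2 l3 :=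
  (Struct.congr e).subtypeEquiv fun p => by
    change _ ↔ congrB e p.1.2 (e v) = some (e w) ∧ congrB e p.1.2 (e w) = none
    simp

end Transport

section DoubleCounting

variable {α : Type*}

theorem exists_equiv_sum_bool [Finite V] [Finite α] {v w : V} (hvw : v ≠ w)
    (hV : Nat.card V = Nat.card α + 2) :
    ∃ e : V ≃ α ⊕ Bool, e v = .inr true ∧ e w = .inr false := by
  classical
  obtain ⟨e₀⟩ := Finite.card_eq.1 (hV.trans (by simp) : Nat.card V = Nat.card (α ⊕ Bool))
  let e₁ := e₀.trans (Equiv.swap (e₀ v) (.inr true))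
  have hv₁ : e₁ v = .inr true := by simp [e₁]
  have hw₁ : e₁ w ≠ .inr true := fun h => hvw (e₁.injective (hv₁.trans h.symm))
  refine ⟨e₁.trans (Equiv.swap (e₁ w) (.inr false)), ?_, by simp⟩
  rw [Equiv.trans_apply, hv₁, Equiv.swap_apply_of_ne_of_ne hw₁.symm (by simp)]

theorem card_pinned_eq [Finite V] [Finite α] {v w : V} (hvw : v ≠ w)
    (hV : Nat.card V = Nat.card α + 2) :
    Nat.card (Pinned V v w k2 k3 l2 l3) =
      Nat.card (Pinned (α ⊕ Bool) (.inr true) (.inr false) k2 k3 l2 l3) := by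
  obtain ⟨e, hv, hw⟩ := exists_equiv_sum_bool hvw hV
  rw [← hv, ← hw]
  exact Nat.card_congr (Pinned.congr e v w)

theorem card_isIsolatedBEdge_pairs (B : V → Option V) :
    Nat.card {vw : V × V // IsIsolatedBEdge B vw.1 vw.2} =
      Nat.card {v // ∃ w, IsIsolatedBEdge B v w} := by
  refine Nat.card_congr (.ofBijective (fun vw => ⟨vw.1.1, vw.1.2, vw.2⟩) ⟨?_, ?_⟩)
  · rintro ⟨⟨v, w⟩, h⟩ ⟨⟨v', w'⟩, h'⟩ hvv'
    obtain rfl : v = v' := congrArg Subtype.val hvv'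
    obtain rfl : w = w' := Option.some_injective _ (h.2.1.symm.trans h'.2.1)
    rfl
  · rintro ⟨v, w, h⟩
    exact ⟨⟨(v, w), h⟩, rfl⟩

theorem card_mul_eq_card_pinned [Finite V] [Finite α] (hV : Nat.card V = Nat.card α + 2) :
    k3 * Nat.card (Struct V k2 k3 l2 l3) = Nat.card V * (Nat.card V - 1) *
      Nat.card (Pinned (α ⊕ Bool) (.inr true) (.inr false) k2 k3 l2 l3) := by
  classical
  have := Fintype.ofFinite V
  have := Fintype.ofFinite (Struct V k2 k3 l2 l3)
  let P : Struct V k2 k3 l2 l3 → V × V → Prop := fun p vw => IsIsolatedBEdge p.1.2 vw.1 vw.2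
  have by_struct : Nat.card {x : Struct V k2 k3 l2 l3 × (V × V) // P x.1 x.2} =
      Nat.card (Struct V k2 k3 l2 l3) * k3 := by
    rw [Nat.card_congr (Equiv.subtypeProdEquivSigmaSubtype P), Nat.card_sigma,
      Finset.sum_congr rfl fun p _ => (card_isIsolatedBEdge_pairs p.1.2).trans p.2.2.2.1]
    simp [Nat.card_eq_fintype_card]
  have by_edge : Nat.card {x : Struct V k2 k3 l2 l3 × (V × V) // P x.1 x.2} =
      Nat.card V * (Nat.card V - 1) *
        Nat.card (Pinned (α ⊕ Bool) (.inr true) (.inr false) k2 k3 l2 l3) := by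
    have swap : {x : Struct V k2 k3 l2 l3 × (V × V) // P x.1 x.2} ≃
        Σ vw : V × V, {p // P p vw} :=
      ((Equiv.prodComm _ _).subtypeEquiv fun _ => Iff.rfl).trans
        (Equiv.subtypeProdEquivSigmaSubtype fun vw p => P p vw)
    have fiber (vw : V × V) : Nat.card {p // P p vw} = if vw.1 = vw.2 then 0 else
        Nat.card (Pinned (α ⊕ Bool) (.inr true) (.inr false) k2 k3 l2 l3) := by
      split_ifs with h
      · simp [P, IsIsolatedBEdge, h]
      · rw [← card_pinned_eq h hV]
        exact Nat.card_congr (Equiv.subtypeEquivRight fun p => by simp [P, IsIsolatedBEdge, h])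
    have off_diag :
        (Finset.univ.filter fun vw : V × V => ¬vw.1 = vw.2) = Finset.univ.offDiag := by
      ext; simp
    rw [Nat.card_congr swap, Nat.card_sigma]
    simp only [fiber, Finset.sum_ite, Finset.sum_const_zero, Finset.sum_const, smul_eq_mul,
      off_diag, Finset.offDiag_card, Finset.card_univ, ← Nat.card_eq_fintype_card,
      ← Nat.mul_sub_one, zero_add]
  rw [mul_comm, ← by_struct, by_edge]

end DoubleCounting

section NewVertices

variable {α : Type*}

@[simp] def spliceB (D : α → Option α) : α ⊕ Bool → Option (α ⊕ Bool)
  | .inl z => (D z).map .inl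
  | .inr true => some (.inr false)
  | .inr false => none

/- The involution of `α` obtained from one of `α ⊕ Bool` by deleting the two new vertices and
shortcutting the path `x — inr b ⋯ inr !b — y` through them. -/
def contract (σ : α ⊕ Bool → α ⊕ Bool) (z : α) : α :=
  match σ (.inl z) with
  | .inl y => y
  | .inr b =>
    match σ (.inr !b) with
    | .inl y => y
    | .inr _ => z

theorem contract_involutive {σ : α ⊕ Bool → α ⊕ Bool} (hσ : Involutive σ) :
    Involutive (contract σ) := by
  intro z
  rcases h : σ (.inl z) with y | b
  · have hy : σ (.inl y) = .inl z := by rw [← h, hσ]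
    simp [contract, h, hy]
  · have hb : σ (.inr b) = .inl z := by rw [← h, hσ]
    rcases h' : σ (.inr !b) with y | c
    · have hy : σ (.inl y) = .inr !b := by rw [← h', hσ]
      simp [contract, h, h', hy, hb]
    · simp [contract, h, h']

theorem eq_of_contract_eq {σ₁ σ₂ : α ⊕ Bool → α ⊕ Bool} (h₁ : Involutive σ₁)
    (h₂ : Involutive σ₂) (hinr : ∀ b, σ₁ (.inr b) = σ₂ (.inr b))
    (hc : contract σ₁ = contract σ₂) : σ₁ = σ₂ := by
  have hinl : ∀ {σ σ' : α ⊕ Bool → α ⊕ Bool}, Involutive σ → Involutive σ' →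
      (∀ b, σ (.inr b) = σ' (.inr b)) → ∀ z b, σ (.inl z) = .inr b → σ' (.inl z) = .inr b :=
    fun {σ σ'} h h' hinr z b hz => by rw [← h (.inl z), hz, hinr, h']
  funext u
  rcases u with z | b
  · rcases hz₁ : σ₁ (.inl z) with y₁ | b₁
    · rcases hz₂ : σ₂ (.inl z) with y₂ | b₂
      · have := congrFun hc z
        simp only [contract, hz₁, hz₂] at this
        rw [this]
      · rw [hinl h₂ h₁ (fun b => (hinr b).symm) z b₂ hz₂] at hz₁
        cases hz₁
    · rw [hinl h₁ h₂ hinr z b₁ hz₁]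
  · exact hinr b

theorem IsReduced.exists_inr_eq_inl [Nonempty α] {σ : Equiv.Perm (α ⊕ Bool)}
    {B : α ⊕ Bool → Option (α ⊕ Bool)} (h : IsReduced σ B)
    (ht : B (.inr true) = some (.inr false)) (hf : B (.inr false) = none) :
    ∃ b z, σ (.inr b) = .inl z := by
  obtain ⟨hσ, hinj, htri, -, hconn⟩ := h
  by_contra! hinr
  have step : ∀ u u', Adj σ B u u' → u.isRight = u'.isRight := by
    rintro u u' (rfl | hB)
    · rcases u with z | b
      · rcases hz : σ (.inl z) with y | b
        · rfl
        · exact absurd (by rw [← hz, hσ]) (hinr b z)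
      · rcases hb : σ (.inr b) with y | c
        · exact absurd hb (hinr b y)
        · rfl
    · rcases u with z | _ | _
      · rcases u' with y | _ | _
        · rfl
        · cases hinj _ _ _ hB ht
        · cases htri _ _ _ hB ht ▸ hf
      · simp [hf] at hB
      · simp only [ht, Option.some.injEq] at hB
        simp [← hB]
  obtain ⟨z⟩ := ‹Nonempty α›
  simpa using congrArg (Quot.lift _ step) (Quot.eqvGen_sound (hconn (.inl z) (.inr true)))

theorem exists_spliceB_eq {B : α ⊕ Bool → Option (α ⊕ Bool)}
    (hinj : ∀ v w u, B v = some u → B w = some u → v = w)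
    (htri : ∀ v w u, B v = some w → B w = some u → B u = some v)
    (ht : B (.inr true) = some (.inr false)) (hf : B (.inr false) = none) :
    ∃ D, spliceB D = B := by
  refine ⟨fun z => (B (.inl z)).bind Sum.getLeft?, funext ?_⟩
  rintro (z | _ | _)
  · rcases h : B (.inl z) with _ | y | _ | _
    · simp [h]
    · simp [h]
    · cases hinj _ _ _ h ht
    · cases htri _ _ _ h ht ▸ hf
  · simp [hf]
  · simp [ht]

theorem card_isIsolatedBEdge_spliceB [Finite α] (D : α → Option α) :
    Nat.card {u // ∃ w, IsIsolatedBEdge (spliceB D) u w} =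
      Nat.card {z // ∃ w, IsIsolatedBEdge D z w} + 1 := by
  rw [Nat.card_subtype_sum]
  congr 1
  · refine Nat.card_congr (Equiv.subtypeEquivRight fun z => ?_)
    simp [IsIsolatedBEdge]
  · rw [Nat.card_congr (Equiv.subtypeEquivRight fun b => (?_ : _ ↔ b = true))]
    · simp
    · cases b <;> simp [IsIsolatedBEdge]

theorem card_bLoop_spliceB [Finite α] (D : α → Option α) :
    Nat.card {u // spliceB D u = some u} = Nat.card {z // D z = some z} := by
  have : IsEmpty {b : Bool // spliceB D (.inr b) = some (.inr b)} :=
    ⟨fun ⟨b, hb⟩ => by cases b <;> simp at hb⟩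
  rw [Nat.card_subtype_sum, Nat.card_of_isEmpty (α := {b : Bool // _}), add_zero]
  exact Nat.card_congr (Equiv.subtypeEquivRight fun z => by simp)

end NewVertices

section Splice

variable {α : Type*} [DecidableEq α]

/- A mark is where the two new vertices `inr true`, `inr false` are attached: an a-edge `x — τ x`
cut into `x — inr true` and `τ x — inr false`, or an a-loop `x` joined to `inr ε`, the other new
vertex becoming an a-loop. -/
abbrev Mark (τ : α → α) : Type _ := {x // τ x ≠ x} ⊕ ({x // τ x = x} × Bool)

def spliceFun (τ : α → α) : Mark τ → α ⊕ Bool → α ⊕ Bool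
  | .inl x, .inl z => if z = x then .inr true else if z = τ x then .inr false else .inl (τ z)
  | .inl x, .inr b => .inl (if b then x else τ x)
  | .inr (x, ε), .inl z => if z = x then .inr ε else .inl (τ z)
  | .inr (x, ε), .inr b => if b = ε then .inl x else .inr b

variable {τ : α → α}

theorem spliceFun_involutive (hτ : Involutive τ) (m : Mark τ) : Involutive (spliceFun τ m) := by
  rcases m with ⟨x, hx⟩ | ⟨⟨x, hx⟩, ε⟩ <;> rintro (z | b)
  · by_cases h₁ : z = x
    · simp [spliceFun, h₁]
    by_cases h₂ : z = τ x
    · simp [spliceFun, h₂, hx]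
    have h₃ : τ z ≠ x := fun h => h₂ (by rw [← h, hτ])
    simp [spliceFun, h₁, h₂, h₃, hτ.injective.ne h₁, hτ z]
  · cases b <;> simp [spliceFun, hx]
  · by_cases h₁ : z = x
    · simp [spliceFun, h₁]
    have h₂ : τ z ≠ x := fun h => h₁ (by rw [← hx] at h; exact hτ.injective h)
    simp [spliceFun, h₁, h₂, hτ z]
  · by_cases h₁ : b = ε <;> simp [spliceFun, h₁]

theorem spliceFun_injective (τ : α → α) : Injective (spliceFun τ) := by
  intro m₁ m₂ h
  have ht := congrFun h (.inr true)
  have hf := congrFun h (.inr false)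
  rcases m₁ with ⟨x₁, h₁⟩ | ⟨⟨x₁, h₁⟩, ε₁⟩ <;> rcases m₂ with ⟨x₂, h₂⟩ | ⟨⟨x₂, h₂⟩, ε₂⟩ <;>
    (try cases ε₁) <;> (try cases ε₂) <;> simp_all [spliceFun]

theorem contract_spliceFun (hτ : Involutive τ) (m : Mark τ) : contract (spliceFun τ m) = τ := by
  funext z
  rcases m with ⟨x, hx⟩ | ⟨⟨x, hx⟩, ε⟩
  · by_cases h₁ : z = x
    · simp [contract, spliceFun, h₁]
    by_cases h₂ : z = τ x
    · simp [contract, spliceFun, h₂, hx, hτ x]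
    · simp [contract, spliceFun, h₁, h₂]
  · by_cases h₁ : z = x
    · simp [contract, spliceFun, h₁, hx]
    · simp [contract, spliceFun, h₁]

theorem exists_spliceFun_eq {σ : α ⊕ Bool → α ⊕ Bool} (hσ : Involutive σ)
    (hatt : ∃ b z, σ (.inr b) = .inl z) :
    ∃ m : Mark (contract σ), spliceFun (contract σ) m = σ := by
  have hτ := contract_involutive hσ
  suffices ∃ m : Mark (contract σ), ∀ b, spliceFun (contract σ) m (.inr b) = σ (.inr b) by
    obtain ⟨m, hm⟩ := this
    exact ⟨m, eq_of_contract_eq (spliceFun_involutive hτ m) hσ hm (contract_spliceFun hτ m)⟩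
  have back : ∀ {u z}, σ u = .inl z → σ (.inl z) = u := fun h => by rw [← h, hσ]
  rcases ht : σ (.inr true) with x | c <;> rcases hf : σ (.inr false) with y | c'
  · have hτx : contract σ x = y := by simp [contract, back ht, hf]
    have hyx : y ≠ x := fun h => by simpa [h, back ht] using back hf
    exact ⟨.inl ⟨x, hτx ▸ hyx⟩, by rintro (_ | _) <;> simp [spliceFun, ht, hf, hτx]⟩
  · obtain rfl : c' = false := by
      cases c'
      · rfl
      · simpa [ht] using (hσ (.inr false)).symm.trans (congrArg σ hf)
    have hτx : contract σ x = x := by simp [contract, back ht, hf]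
    exact ⟨.inr (⟨x, hτx⟩, true), by rintro (_ | _) <;> simp [spliceFun, ht, hf]⟩
  · obtain rfl : c = true := by
      cases c
      · simpa [hf] using (hσ (.inr true)).symm.trans (congrArg σ ht)
      · rfl
    have hτy : contract σ y = y := by simp [contract, back hf, ht]
    exact ⟨.inr (⟨y, hτy⟩, false), by rintro (_ | _) <;> simp [spliceFun, ht, hf]⟩
  · obtain ⟨b, z, hz⟩ := hatt
    cases b <;> simp_all

def splicePerm (hτ : Involutive τ) (m : Mark τ) : Equiv.Perm (α ⊕ Bool) :=
  (spliceFun_involutive hτ m).toPerm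

@[simp] theorem splicePerm_apply (hτ : Involutive τ) (m : Mark τ) (u : α ⊕ Bool) :
    splicePerm hτ m u = spliceFun τ m u := rfl

def Mark.point : Mark τ → α
  | .inl x => x
  | .inr (x, _) => x

def Mark.proj (m : Mark τ) : α ⊕ Bool → α :=
  Sum.elim id fun b => if b then m.point else τ m.point

theorem Mark.proj_spliceFun (m : Mark τ) (u : α ⊕ Bool) :
    m.proj (spliceFun τ m u) = m.proj u ∨ m.proj (spliceFun τ m u) = τ (m.proj u) := by
  rcases m with ⟨x, hx⟩ | ⟨⟨x, hx⟩, ε⟩ <;> rcases u with z | b <;>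
    simp only [spliceFun, Mark.proj, Mark.point] <;> split_ifs <;> simp_all

theorem card_moved_spliceFun [Finite α] (hτ : Involutive τ) (m : Mark τ) :
    Nat.card {u // spliceFun τ m u ≠ u} = Nat.card {z // τ z ≠ z} + 2 := by
  rw [Nat.card_subtype_sum]
  rcases m with ⟨x, hx⟩ | ⟨⟨x, hx⟩, ε⟩
  · congr 1
    · refine Nat.card_congr (Equiv.subtypeEquivRight fun z => ?_)
      by_cases h₁ : z = x
      · simp [spliceFun, h₁, hx]
      by_cases h₂ : z = τ x
      · simp [spliceFun, h₂, hx, hτ x, Ne.symm hx]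
      · simp [spliceFun, h₁, h₂]
    · simp [spliceFun]
  · rw [Nat.card_congr (Equiv.subtypeEquivRight fun z => (?_ : _ ↔ z = x ∨ τ z ≠ z)),
      Nat.card_subtype_eq_or (by simpa using hx)]
    · simp [spliceFun]
    · by_cases h₁ : z = x <;> simp [spliceFun, h₁]

end Splice

section SpliceStructure

variable {α : Type*} [DecidableEq α] {τ : Equiv.Perm α} (hτ : Involutive τ) (m : Mark τ)
  (D : α → Option α)

theorem adj_splice_inl {z z' : α} (h : Adj τ D z z') :
    Relation.EqvGen (Adj (splicePerm hτ m) (spliceB D)) (.inl z) (.inl z') := by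
  rcases h with rfl | h
  · rcases m with ⟨x, hx⟩ | ⟨⟨x, hx⟩, ε⟩
    · have detour : Relation.EqvGen (Adj (splicePerm hτ (.inl ⟨x, hx⟩)) (spliceB D))
          (.inl x) (.inl (τ x)) :=
        .trans _ (.inr true) _ (.rel _ _ (Or.inl (by simp [spliceFun])))
          (.trans _ (.inr false) _ (.rel _ _ (Or.inr rfl))
            (.rel _ _ (Or.inl (by simp [spliceFun]))))
      by_cases h₁ : z = x
      · exact h₁ ▸ detour
      by_cases h₂ : z = τ x
      · simpa [h₂, hτ x] using detour.symm
      · exact .rel _ _ (Or.inl (by simp [spliceFun, h₁, h₂]))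
    · by_cases h₁ : z = x
      · simpa [h₁, hx] using .refl _
      · exact .rel _ _ (Or.inl (by simp [spliceFun, h₁]))
  · exact .rel _ _ (Or.inr (by simp [h]))

theorem eqvGen_splice_inl_point (hconn : ∀ z z', Relation.EqvGen (Adj τ D) z z')
    (u : α ⊕ Bool) : Relation.EqvGen (Adj (splicePerm hτ m) (spliceB D)) u (.inl m.point) := by
  rcases u with z | b
  · exact (hconn z m.point).map Sum.inl fun _ _ => adj_splice_inl hτ m D
  rcases m with ⟨x, hx⟩ | ⟨⟨x, hx⟩, ε⟩
  · cases b
    · exact .trans _ (.inl (τ x)) _ (.rel _ _ (Or.inl (by simp [spliceFun])))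
        ((adj_splice_inl hτ _ D (Or.inl rfl)).symm _ _)
    · exact .rel _ _ (Or.inl (by simp [spliceFun, Mark.point]))
  · have hε : Relation.EqvGen (Adj (splicePerm hτ (.inr (⟨x, hx⟩, ε))) (spliceB D))
        (.inr ε) (.inl x) := .rel _ _ (Or.inl (by simp [spliceFun]))
    have hb : Relation.EqvGen (Adj (splicePerm hτ (.inr (⟨x, hx⟩, ε))) (spliceB D))
        (.inr true) (.inr false) := .rel _ _ (Or.inr rfl)
    by_cases h : b = ε
    · exact h ▸ hε
    · cases b <;> cases ε
      · exact absurd rfl h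
      · exact (hb.symm _ _).trans _ _ _ hε
      · exact hb.trans _ _ _ hε
      · exact absurd rfl h

theorem eqvGen_proj_of_adj_splice {u u' : α ⊕ Bool}
    (h : Adj (splicePerm hτ m) (spliceB D) u u') :
    Relation.EqvGen (Adj τ D) (m.proj u) (m.proj u') := by
  rcases h with rfl | h
  · rcases m.proj_spliceFun u with h | h
    · simpa [h] using .refl _
    · exact .rel _ _ (Or.inl h.symm)
  · rcases u with z | _ | _
    · simp only [spliceB, Option.map_eq_some_iff] at h
      obtain ⟨z', hz', rfl⟩ := h
      exact .rel _ _ (Or.inr (by simpa [Mark.proj] using hz'))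
    · simp at h
    · simp only [spliceB, Option.some.injEq] at h
      subst h
      exact .rel _ _ (Or.inl (by simp [Mark.proj]))

theorem connected_splice_iff :
    (∀ u u', Relation.EqvGen (Adj (splicePerm hτ m) (spliceB D)) u u') ↔
      ∀ z z', Relation.EqvGen (Adj τ D) z z' := by
  refine ⟨fun h z z' => ?_, fun h u u' => ?_⟩
  · simpa [Mark.proj] using
      (h (.inl z) (.inl z')).map m.proj fun _ _ => eqvGen_proj_of_adj_splice hτ m D
  · exact (eqvGen_splice_inl_point hτ m D h u).trans _ _ _
      ((eqvGen_splice_inl_point hτ m D h u').symm _ _)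

theorem isReduced_splice_iff : IsReduced (splicePerm hτ m) (spliceB D) ↔ IsReduced τ D := by
  unfold IsReduced
  rw [connected_splice_iff hτ m D]
  refine and_congr (iff_of_true (spliceFun_involutive hτ m) hτ)
    (and_congr ⟨fun h v w u hv hw => ?_, fun h => ?_⟩
      (and_congr ⟨fun h v w u hv hw => ?_, fun h => ?_⟩
        (and_congr ⟨fun h v => ?_, fun h => ?_⟩ Iff.rfl)))
  · simpa using h (.inl v) (.inl w) (.inl u) (by simp [hv]) (by simp [hw])
  · rintro (v | _ | _) (w | _ | _) (u | _ | _) hv hw <;> simp_all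
    exact h _ _ _ hv hw
  · simpa using h (.inl v) (.inl w) (.inl u) (by simp [hv]) (by simp [hw])
  · rintro (v | _ | _) (w | _ | _) (u | _ | _) hv hw <;> simp_all
    exact h _ _ _ hv hw
  · simpa using h (.inl v)
  · rintro (v | _ | _) <;> simp_all

theorem hasType_splice_iff [Finite α] :
    HasType (splicePerm hτ m) (spliceB D) (k2 + 1) (k3 + 1) l2 l3 ↔ HasType τ D k2 k3 l2 l3 := by
  have hmoved := card_moved_spliceFun hτ m
  have hfixed : Nat.card {u // spliceFun τ m u = u} = Nat.card {z // τ z = z} := by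
    have h₁ := Nat.card_fixed_add_card_moved (spliceFun τ m)
    have h₂ := Nat.card_fixed_add_card_moved τ
    rw [Nat.card_sum, Nat.card_eq_fintype_card (α := Bool), Fintype.card_bool] at h₁
    omega
  simp only [HasType, splicePerm_apply, hmoved, hfixed, card_isIsolatedBEdge_spliceB,
    card_bLoop_spliceB]
  omega

end SpliceStructure

section Bijection

variable {α : Type*} [DecidableEq α] [Finite α]

def splice (q : Σ q : Struct α k2 k3 l2 l3, Mark q.1.1) :
    Pinned (α ⊕ Bool) (.inr true) (.inr false) (k2 + 1) (k3 + 1) l2 l3 :=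
  ⟨⟨(splicePerm q.1.2.1.1 q.2, spliceB q.1.1.2), (isReduced_splice_iff q.1.2.1.1 _ _).2 q.1.2.1,
    (hasType_splice_iff q.1.2.1.1 _ _).2 q.1.2.2⟩, rfl, rfl⟩

theorem splice_injective :
    Injective (splice (α := α) (k2 := k2) (k3 := k3) (l2 := l2) (l3 := l3)) := by
  rintro ⟨⟨⟨τ₁, D₁⟩, h₁⟩, m₁⟩ ⟨⟨⟨τ₂, D₂⟩, h₂⟩, m₂⟩ h
  simp only [splice, Subtype.mk.injEq, Prod.mk.injEq] at h
  obtain ⟨hσ, hB⟩ := h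
  replace hσ : spliceFun τ₁ m₁ = spliceFun τ₂ m₂ := congrArg DFunLike.coe hσ
  obtain rfl : τ₁ = τ₂ := DFunLike.coe_injective <| by
    rw [← contract_spliceFun h₁.1.1 m₁, hσ, contract_spliceFun h₂.1.1 m₂]
  obtain rfl : D₁ = D₂ := funext fun z =>
    Option.map_injective Sum.inl_injective (congrFun hB (.inl z))
  obtain rfl : m₁ = m₂ := spliceFun_injective _ hσ
  rfl

theorem splice_surjective [Nonempty α] :
    Surjective (splice (α := α) (k2 := k2) (k3 := k3) (l2 := l2) (l3 := l3)) := by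
  rintro ⟨⟨⟨σ, B⟩, hred, htype⟩, ht, hf⟩
  change IsReduced σ B at hred
  change HasType σ B _ _ _ _ at htype
  let τ : Equiv.Perm α := (contract_involutive hred.1).toPerm
  have hτ : Involutive τ := contract_involutive hred.1
  obtain ⟨m, hm⟩ : ∃ m : Mark τ, spliceFun τ m = σ :=
    exists_spliceFun_eq hred.1 (hred.exists_inr_eq_inl ht hf)
  obtain ⟨D, rfl⟩ := exists_spliceB_eq hred.2.1 hred.2.2.1 ht hf
  have hσ : splicePerm hτ m = σ := Equiv.ext (congrFun hm)
  rw [← hσ] at hred htype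
  exact ⟨⟨⟨(τ, D), (isReduced_splice_iff hτ m D).1 hred, (hasType_splice_iff hτ m D).1 htype⟩,
    m⟩, Subtype.ext (Subtype.ext (Prod.ext hσ rfl))⟩

variable [Nonempty α]

theorem card_pinned_succ :
    Nat.card (Pinned (α ⊕ Bool) (.inr true) (.inr false) (k2 + 1) (k3 + 1) l2 l3) =
      (2 * k2 + 2 * l2) * Nat.card (Struct α k2 k3 l2 l3) := by
  have := Fintype.ofFinite (Struct α k2 k3 l2 l3)
  have card_mark (q : Struct α k2 k3 l2 l3) : Nat.card (Mark q.1.1) = 2 * k2 + 2 * l2 := by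
    rw [Nat.card_sum, Nat.card_prod, q.2.2.1, q.2.2.2.2.1, Nat.card_eq_fintype_card (α := Bool),
      Fintype.card_bool, mul_comm l2]
  rw [← Nat.card_congr (Equiv.ofBijective _ ⟨splice_injective, splice_surjective⟩),
    Nat.card_sigma, Finset.sum_congr rfl fun q _ => card_mark q, Finset.sum_const,
    Finset.card_univ, ← Nat.card_eq_fintype_card, smul_eq_mul, mul_comm]

instance : IsEmpty (Pinned (α ⊕ Bool) (.inr true) (.inr false) 0 k3 l2 l3) := by
  refine ⟨fun ⟨⟨⟨σ, B⟩, hred, htype⟩, ht, hf⟩ => ?_⟩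
  obtain ⟨m, hm⟩ := exists_spliceFun_eq hred.1 (hred.exists_inr_eq_inl ht hf)
  have hmoved := card_moved_spliceFun (contract_involutive hred.1) m
  rw [hm] at hmoved
  have := htype.1
  omega

end Bijection

end CycRed

open CycRed

theorem s_natCast (n k2 k3 l2 l3 : ℕ) :
    s n k2 k3 l2 l3 = Nat.card (Struct (Fin n) k2 k3 l2 l3) := by
  simp only [s, Int.toNat_natCast, Nat.cast_nonneg, and_self, if_true]
  rfl

theorem stmt2 (n k2 k3 l2 l3 : ℤ) (hn : 3 ≤ n) (hk2 : 0 ≤ k2) (hk3 : 1 ≤ k3)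
    (hl2 : 0 ≤ l2) (hl3 : 0 ≤ l3) :
    k3 * (s n k2 k3 l2 l3 : ℤ) =
      2 * n * (n - 1) * (k2 - 1 + l2) * (s (n - 2) (k2 - 1) (k3 - 1) l2 l3 : ℤ) := by
  obtain ⟨M, rfl⟩ : ∃ M : ℕ, n = M + 3 := ⟨(n - 3).toNat, by omega⟩
  obtain ⟨K3, rfl⟩ : ∃ K3 : ℕ, k3 = K3 + 1 := ⟨(k3 - 1).toNat, by omega⟩
  lift k2 to ℕ using hk2
  lift l2 to ℕ using hl2
  lift l3 to ℕ using hl3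
  have key := card_mul_eq_card_pinned (V := Fin (M + 3)) (α := Fin (M + 1))
    (k2 := k2) (k3 := K3 + 1) (l2 := l2) (l3 := l3) (by simp)
  have hbig : s (M + 3) k2 (K3 + 1) l2 l3 = Nat.card (Struct (Fin (M + 3)) k2 (K3 + 1) l2 l3) := by
    exact_mod_cast s_natCast (M + 3) k2 (K3 + 1) l2 l3
  rw [hbig, add_sub_cancel_right, show (M : ℤ) + 3 - 2 = (M + 1 : ℕ) by push_cast; ring]
  rcases k2 with _ | K2
  · have hempty : Nat.card (Struct (Fin (M + 3)) 0 (K3 + 1) l2 l3) = 0 := by simpa using key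
    rw [hempty, s, if_neg (by omega)]
    simp
  · rw [card_pinned_succ] at key
    rw [show ((K2 + 1 : ℕ) : ℤ) - 1 = K2 by push_cast; ring, s_natCast]
    simp only [Nat.card_fin] at key
    linear_combination (norm := (push_cast; ring)) (congrArg (Nat.cast : ℕ → ℤ) key)
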